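/- arXiv:1606.08077 — 2 statements merged into one kernel-verified Lean document; each statement's English description precedes it below -/
import Mathlib

section
/- Assume that there are two players with monotonic preferences ≽_1 and ≽_2 on the subsets of a set S of m items. Then there exists a subset T ⊆ S with |T| ≤ ⌈(m+1)/2⌉ such that T is agreeable to both players, i.e., T ≽_1 S∖T and T ≽_2 S∖T. -/
/-!
Let `k = ⌊m/2⌋`, so that a `k`-set and its complement both have at most `⌈(m+1)/2⌉` items,
and suppose no such small set is agreeable to both players. Then every `k`-set is agreeable to
exactly one player and its complement to the other one. Agreeability is upward closed, so a
`k`-set agreeable to player 1 and one agreeable to player 2 cannot differ by a single swap: their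
union, of `k + 1` items, would be agreeable to both. Hence all `k`-sets are agreeable to the same
player. But of two disjoint `k`-sets `A` and `B` exactly one is agreeable to player 1: if `A` is
agreeable to a player, so is `Bᶜ ⊇ A`, and then `B` is not.
-/

open Finset

/-- A preference on subsets: a complete (total, hence reflexive) and transitive relation. -/
def IsPref {m : ℕ} (R : Finset (Fin m) → Finset (Fin m) → Prop) : Prop :=
  (∀ A B, R A B ∨ R B A) ∧ ∀ A B C, R A B → R B C → R A C

/-- A preference on single items: a complete and transitive relation. -/
def IsSingPref {m : ℕ} (Rs : Fin m → Fin m → Prop) : Prop :=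
  (∀ x y, Rs x y ∨ Rs y x) ∧ ∀ x y z, Rs x y → Rs y z → Rs x z

/-- A preference is monotonic if `T ∪ {x} ≽ T` for every subset `T` and item `x`. -/
def MonotonicPref {m : ℕ} (R : Finset (Fin m) → Finset (Fin m) → Prop) : Prop :=
  ∀ (T : Finset (Fin m)) (x : Fin m), R (insert x T) T

/-- A preference on subsets is responsive w.r.t. a preference `Rs` on single items if it is
monotonic and `(T \ {y}) ∪ {x} ≽ T` whenever `x ∉ T`, `y ∈ T` and `x ≽ˢ y`. -/
def Responsive {m : ℕ} (Rs : Fin m → Fin m → Prop)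
    (R : Finset (Fin m) → Finset (Fin m) → Prop) : Prop :=
  MonotonicPref R ∧
    ∀ (T : Finset (Fin m)) (x y : Fin m),
      x ∉ T → y ∈ T → Rs x y → R (insert x (T.erase y)) T

/-- A preference on subsets is consistent with a preference on single items if its
restriction to singletons agrees with it. -/
def Consistent {m : ℕ} (Rs : Fin m → Fin m → Prop)
    (R : Finset (Fin m) → Finset (Fin m) → Prop) : Prop :=
  ∀ x y : Fin m, R {x} {y} ↔ Rs x y

/-- `T` is necessarily agreeable w.r.t. `Rs` if `T ≽ Tᶜ` for every responsive preference
consistent with `Rs`. -/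
def NecAgreeable {m : ℕ} (Rs : Fin m → Fin m → Prop) (T : Finset (Fin m)) : Prop :=
  ∀ R : Finset (Fin m) → Finset (Fin m) → Prop,
    IsPref R → Responsive Rs R → Consistent Rs R → R T Tᶜ

/-- `T` is possibly agreeable w.r.t. `Rs` if `T ≻ Tᶜ` for some responsive preference
consistent with `Rs`. -/
def PossAgreeable {m : ℕ} (Rs : Fin m → Fin m → Prop) (T : Finset (Fin m)) : Prop :=
  ∃ R : Finset (Fin m) → Finset (Fin m) → Prop,
    IsPref R ∧ Responsive Rs R ∧ Consistent Rs R ∧ R T Tᶜ ∧ ¬ R Tᶜ T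

lemma IsPref.refl {m : ℕ} {R : Finset (Fin m) → Finset (Fin m) → Prop} (hR : IsPref R)
    (A : Finset (Fin m)) : R A A :=
  (hR.1 A A).elim id id

lemma MonotonicPref.pref_of_subset {m : ℕ} {R : Finset (Fin m) → Finset (Fin m) → Prop}
    (hR : IsPref R) (hm : MonotonicPref R) {A B : Finset (Fin m)} (hBA : B ⊆ A) : R A B := by
  rw [← union_sdiff_of_subset hBA]
  induction A \ B using Finset.induction_on with
  | empty => simpa using hR.refl B
  | insert x C _ ih => rw [union_insert]; exact hR.2 _ _ _ (hm _ x) ih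

def Agreeable {m : ℕ} (R : Finset (Fin m) → Finset (Fin m) → Prop) (T : Finset (Fin m)) : Prop :=
  R T Tᶜ

lemma agreeable_or_agreeable_compl {m : ℕ} {R : Finset (Fin m) → Finset (Fin m) → Prop}
    (hR : IsPref R) (T : Finset (Fin m)) : Agreeable R T ∨ Agreeable R Tᶜ := by
  simpa [Agreeable] using hR.1 T Tᶜ

lemma agreeable_iff_of_not_agreeable_both {m : ℕ}
    {R1 R2 : Finset (Fin m) → Finset (Fin m) → Prop} (h1 : IsPref R1) (h2 : IsPref R2)
    {X : Finset (Fin m)} (hX : ¬(Agreeable R1 X ∧ Agreeable R2 X))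
    (hXc : ¬(Agreeable R1 Xᶜ ∧ Agreeable R2 Xᶜ)) :
    (Agreeable R1 X ↔ ¬Agreeable R1 Xᶜ) ∧ (Agreeable R1 X ↔ ¬Agreeable R2 X) ∧
      (Agreeable R1 X ↔ Agreeable R2 Xᶜ) := by
  have := agreeable_or_agreeable_compl h1 X
  have := agreeable_or_agreeable_compl h2 X
  tauto

lemma Agreeable.mono {m : ℕ} {R : Finset (Fin m) → Finset (Fin m) → Prop}
    (hR : IsPref R) (hm : MonotonicPref R) {X Y : Finset (Fin m)} (hX : Agreeable R X)
    (hXY : X ⊆ Y) : Agreeable R Y :=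
  hR.2 _ _ _ (hR.2 _ _ _ (hm.pref_of_subset hR hXY) hX)
    (hm.pref_of_subset hR (compl_subset_compl.mpr hXY))

/-- Sets of equal size are joined by a chain of single swaps, along which `P` has to change
value somewhere. -/
lemma exists_swap_of_card_eq {α : Type*} [DecidableEq α] (P : Finset α → Prop)
    {A B : Finset α} (hAB : #A = #B) (hA : P A) (hB : ¬P B) :
    ∃ X Y : Finset α, #X = #A ∧ #Y = #A ∧ #(X ∪ Y) ≤ #A + 1 ∧ P X ∧ ¬P Y := by
  induction hn : #(A \ B) generalizing A with
  | zero =>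
    have hsub : A ⊆ B := sdiff_eq_empty_iff_subset.mp (card_eq_zero.mp hn)
    exact absurd (eq_of_subset_of_card_le hsub hAB.ge ▸ hA) hB
  | succ n ih =>
    obtain ⟨x, hx⟩ : (A \ B).Nonempty := card_pos.mp (by omega)
    have hBA : #(B \ A) = #(A \ B) := by
      have := card_sdiff_add_card_inter A B
      have := card_sdiff_add_card_inter B A
      rw [inter_comm] at this
      omega
    obtain ⟨y, hy⟩ : (B \ A).Nonempty := card_pos.mp (by omega)
    rw [mem_sdiff] at hx hy
    set A' := insert y (A.erase x)
    have hA' : #A' = #A := by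
      rw [card_insert_of_notMem (fun h => hy.2 (mem_of_mem_erase h)), card_erase_add_one hx.1]
    by_cases hPA' : P A'
    · have hA'B : A' \ B = (A \ B).erase x := by
        ext z
        simp only [A', mem_sdiff, mem_insert, mem_erase]
        aesop
      obtain ⟨X, Y, hX, hY, hXY⟩ := ih (hA'.trans hAB) hPA'
        (by rw [hA'B, card_erase_of_mem (mem_sdiff.mpr hx), hn]; rfl)
      exact ⟨X, Y, hX.trans hA', hY.trans hA', hA' ▸ hXY⟩
    · refine ⟨A, A', rfl, hA', ?_, hA, hPA'⟩
      calc #(A ∪ A') ≤ #(insert y A) := card_le_card (union_subset (subset_insert _ _)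
              (insert_subset_insert _ (erase_subset _ _)))
        _ ≤ #A + 1 := card_insert_le _ _

/-- Two players with monotonic preferences: there is a subset `T` of size at most
`⌈(m+1)/2⌉ = (m+2)/2` (ℕ-division) that is agreeable to both. -/
theorem stmt_6 {m : ℕ} (R1 R2 : Finset (Fin m) → Finset (Fin m) → Prop)
    (h1 : IsPref R1) (h2 : IsPref R2)
    (hm1 : MonotonicPref R1) (hm2 : MonotonicPref R2) :
    ∃ T : Finset (Fin m), T.card ≤ (m + 2) / 2 ∧ R1 T Tᶜ ∧ R2 T Tᶜ := by
  by_contra! hno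
  have hcard_compl (X : Finset (Fin m)) : #Xᶜ = m - #X := by simp [card_compl]
  have htype (X : Finset (Fin m)) (hX : #X = m / 2) :=
    agreeable_iff_of_not_agreeable_both h1 h2 (X := X) (fun h => hno X (by omega) h.1 h.2)
      (fun h => hno Xᶜ (by rw [hcard_compl]; omega) h.1 h.2)
  have hswap (X Y : Finset (Fin m)) (hY : #Y = m / 2)
      (hXY : #(X ∪ Y) ≤ m / 2 + 1) (hX1 : Agreeable R1 X) (hY1 : ¬Agreeable R1 Y) : False :=
    hno (X ∪ Y) (by omega) (hX1.mono h1 hm1 subset_union_left)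
      ((((htype Y hY).2.1.not_left).mp hY1).mono h2 hm2 subset_union_right)
  obtain ⟨A, -, hA⟩ := exists_subset_card_eq (s := (univ : Finset (Fin m))) (n := m / 2)
    (by simp; omega)
  obtain ⟨B, hBA, hB⟩ := exists_subset_card_eq (s := Aᶜ) (n := m / 2) (by rw [hcard_compl]; omega)
  have hAB : A ⊆ Bᶜ := subset_compl_comm.mp hBA
  have hflip : Agreeable R1 A ↔ ¬Agreeable R1 B := by
    have := htype A hA
    have := htype B hB
    have := fun h => Agreeable.mono h1 hm1 h hAB
    have := fun h => Agreeable.mono h2 hm2 h hAB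
    tauto
  by_cases hA1 : Agreeable R1 A
  · obtain ⟨X, Y, -, hY, hXY, hX1, hY1⟩ :=
      exists_swap_of_card_eq _ (hA.trans hB.symm) hA1 (hflip.mp hA1)
    exact hswap X Y (hY.trans hA) (hA ▸ hXY) hX1 hY1
  · obtain ⟨X, Y, -, hY, hXY, hX1, hY1⟩ :=
      exists_swap_of_card_eq _ (hB.trans hA.symm) (not_not.mp (hflip.not.mp hA1)) hA1
    exact hswap X Y (hY.trans hB) (hB ▸ hXY) hX1 hY1
end

section
/- For every m ≥ 3 there exist three responsive preferences ≽_1, ≽_2, ≽_3 on the subsets of a set S of m items such that every subset T ⊆ S that is agreeable to all three players (i.e., T ≽_i S∖T for i = 1, 2, 3) satisfies |T| ≥ ⌈m/2⌉ + 1. -/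
/-!
Every player values a bundle additively, an item of a set `G` of favourites weighing 3 and any
other item 1; such preferences are responsive. For these weights, `T ≽ Tᶜ` reads
`2|T| + 4|T ∩ G| ≥ m + 2|G|`. Players 1 and 2 favour single items `a` and `b`, player 3 the other
`m - 2` items. If `T` misses `a` (or `b`), player 1 (or 2) forces `2|T| ≥ m + 2`; if `T` contains
both, player 3 forces `6|T| ≥ 3m + 4`. Either way `|T| ≥ ⌈m/2⌉ + 1`.
-/

open Finset

/-- A preference on subsets is (self-)responsive if it is monotonic and
`(T \ {y}) ∪ {x} ≽ T` whenever `x ∉ T`, `y ∈ T` and `{x} ≽ {y}`. -/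
def SelfResponsive {m : ℕ} (R : Finset (Fin m) → Finset (Fin m) → Prop) : Prop :=
  MonotonicPref R ∧
    ∀ (T : Finset (Fin m)) (x y : Fin m),
      x ∉ T → y ∈ T → R {x} {y} → R (insert x (T.erase y)) T

def additivePref {m : ℕ} (w : Fin m → ℕ) (A B : Finset (Fin m)) : Prop :=
  ∑ i ∈ B, w i ≤ ∑ i ∈ A, w i

lemma isPref_additivePref {m : ℕ} (w : Fin m → ℕ) : IsPref (additivePref w) :=
  ⟨fun _ _ => le_total _ _, fun _ _ _ hAB hBC => hBC.trans hAB⟩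

lemma selfResponsive_additivePref {m : ℕ} (w : Fin m → ℕ) : SelfResponsive (additivePref w) := by
  refine ⟨fun T x => sum_le_sum_of_subset (subset_insert x T), fun T x y hxT hyT hxy => ?_⟩
  have hwyx : w y ≤ w x := by simpa [additivePref] using hxy
  have hxT' : x ∉ T.erase y := fun h => hxT (mem_of_mem_erase h)
  unfold additivePref
  rw [sum_insert hxT', ← add_sum_erase T w hyT]
  omega

def favoring {m : ℕ} (G : Finset (Fin m)) : Finset (Fin m) → Finset (Fin m) → Prop :=
  additivePref fun i => if i ∈ G then 3 else 1

lemma sum_favoring_weight {m : ℕ} (G T : Finset (Fin m)) :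
    ∑ i ∈ T, (if i ∈ G then 3 else 1) = #T + 2 * #(T ∩ G) := by
  rw [sum_ite, sum_const, sum_const, filter_mem_eq_inter, smul_eq_mul, smul_eq_mul, mul_one]
  have := card_filter_add_card_filter_not (s := T) (· ∈ G)
  rw [filter_mem_eq_inter] at this
  omega

lemma le_of_favoring_compl {m : ℕ} {G T : Finset (Fin m)} (hT : favoring G T Tᶜ) :
    m + 2 * #G ≤ 2 * #T + 4 * #(T ∩ G) := by
  have hweights : #Tᶜ + 2 * #(Tᶜ ∩ G) ≤ #T + 2 * #(T ∩ G) := by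
    simpa only [favoring, additivePref, sum_favoring_weight] using hT
  have hsplitT : #T + #Tᶜ = m := by rw [card_add_card_compl, Fintype.card_fin]
  have hsplitG : #(T ∩ G) + #(Tᶜ ∩ G) = #G := by
    rw [inter_comm T, inter_comm Tᶜ, ← sdiff_eq_inter_compl]
    exact card_inter_add_card_sdiff G T
  omega

lemma card_bound_of_favoring_singleton {m : ℕ} {a : Fin m} {T : Finset (Fin m)}
    (hT : favoring {a} T Tᶜ) (ha : a ∉ T) : m + 2 ≤ 2 * #T := by
  simpa [inter_singleton_of_notMem ha] using le_of_favoring_compl hT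

lemma card_bound_of_favoring_compl_pair {m : ℕ} {a b : Fin m} {T : Finset (Fin m)}
    (hT : favoring {a, b}ᶜ T Tᶜ) (hab : a ≠ b) (ha : a ∈ T) (hb : b ∈ T) :
    3 * m + 4 ≤ 6 * #T := by
  have hpair : #({a, b} : Finset (Fin m)) = 2 := card_pair hab
  have hpairT : {a, b} ⊆ T := insert_subset ha (singleton_subset_iff.2 hb)
  have hG : #({a, b}ᶜ : Finset (Fin m)) = m - 2 := by
    rw [card_compl, Fintype.card_fin, hpair]
  have hTG : #(T ∩ {a, b}ᶜ) = #T - 2 := by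
    rw [← sdiff_eq_inter_compl, card_sdiff_of_subset hpairT, hpair]
  have hT2 : 2 ≤ #T := hpair ▸ card_le_card hpairT
  have := le_of_favoring_compl hT
  omega

/-- Tightness for three players: for every `m ≥ 3` there exist responsive preferences such
that every subset agreeable to all three players has size at least `⌈m/2⌉ + 1`. -/
theorem stmt_14 (m : ℕ) (hm : 3 ≤ m) :
    ∃ R1 R2 R3 : Finset (Fin m) → Finset (Fin m) → Prop,
      IsPref R1 ∧ IsPref R2 ∧ IsPref R3 ∧
      SelfResponsive R1 ∧ SelfResponsive R2 ∧ SelfResponsive R3 ∧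
      ∀ T : Finset (Fin m), R1 T Tᶜ → R2 T Tᶜ → R3 T Tᶜ → (m + 1) / 2 + 1 ≤ T.card := by
  set a : Fin m := ⟨0, by omega⟩
  set b : Fin m := ⟨1, by omega⟩
  have hab : a ≠ b := by simp [a, b, Fin.ext_iff]
  refine ⟨favoring {a}, favoring {b}, favoring {a, b}ᶜ, isPref_additivePref _,
    isPref_additivePref _, isPref_additivePref _, selfResponsive_additivePref _,
    selfResponsive_additivePref _, selfResponsive_additivePref _, fun T hT1 hT2 hT3 => ?_⟩
  by_cases ha : a ∈ T
  · by_cases hb : b ∈ T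
    · have := card_bound_of_favoring_compl_pair hT3 hab ha hb
      omega
    · have := card_bound_of_favoring_singleton hT2 hb
      omega
  · have := card_bound_of_favoring_singleton hT1 ha
    omega
end
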